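/- Let G be a connected graph with a sign function σ : E(G) → ℤ/2ℤ, and suppose G is unbalanced (contains a cycle of odd total sign). Then the collection I = {F ⊆ E(G) : every connected component of G ∖ F is unbalanced} is the collection of independent sets of a matroid on the ground set E(G), and the rank of this matroid equals |E(G)| − |V(G)|. (Here G ∖ F denotes deletion of the edges in F, keeping all vertices.) -/

import Mathlib

open scoped Classical

structure HGraph where
  V : Type
  H : Type
  [fintV : Fintype V]
  [fintH : Fintype H]
  [decV : DecidableEq V]
  [decH : DecidableEq H]
  root : H → V
  inv : H → H
  inv_inv : ∀ h, inv (inv h) = h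
  inv_ne : ∀ h, inv h ≠ h

attribute [instance] HGraph.fintV HGraph.fintH HGraph.decV HGraph.decH

namespace HGraph

variable (G : HGraph)

/-- The setoid on half-edges whose classes are the edges. -/
def edgeSetoid : Setoid G.H where
  r h h' := h' = h ∨ h' = G.inv h
  iseqv := by
    refine ⟨fun h => Or.inl rfl, ?_, ?_⟩
    · rintro a b (rfl | rfl)
      · exact Or.inl rfl
      · exact Or.inr (G.inv_inv a).symm
    · rintro a b c (rfl | rfl) hbc
      · exact hbc
      · rcases hbc with rfl | rfl
        · exact Or.inr rfl
        · exact Or.inl (G.inv_inv a)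

instance edgeDec : DecidableRel G.edgeSetoid.r := fun _ _ => instDecidableOr

/-- The edges of a graph: orbits of the involution on half-edges. -/
def Edge := Quotient G.edgeSetoid

instance : Fintype G.Edge := @Quotient.fintype _ _ G.edgeSetoid G.edgeDec
instance : DecidableEq G.Edge := @Quotient.decidableEq _ G.edgeSetoid G.edgeDec

/-- The edge underlying a half-edge. -/
def edge (h : G.H) : G.Edge := Quotient.mk G.edgeSetoid h

lemma edge_inv (h : G.H) : G.edge (G.inv h) = G.edge h :=
  Quotient.sound (Or.inr (G.inv_inv h).symm)

/-- The valence of a vertex: the number of half-edges rooted at it. -/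
def val (v : G.V) : ℕ := (Finset.univ.filter fun h => G.root h = v).card

/-- Two vertices are adjacent through an edge belonging to `S`. -/
def adjOn (S : Finset G.Edge) (v w : G.V) : Prop :=
  ∃ h, G.edge h ∈ S ∧ G.root h = v ∧ G.root (G.inv h) = w

/-- The spanning subgraph with edge set `S` is connected. -/
def ConnectedOn (S : Finset G.Edge) : Prop :=
  ∀ v w : G.V, Relation.ReflTransGen (G.adjOn S) v w

/-- The graph is connected. -/
def Connected : Prop := Nonempty G.V ∧ G.ConnectedOn Finset.univ

/-- Euler characteristic of a vertex, for a genus function `gV`. -/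
def chiZ (gV : G.V → ℤ) (v : G.V) : ℤ := 2 - 2 * gV v - G.val v

/-- The genus of a (connected) weighted graph. -/
def genusZ (gV : G.V → ℤ) : ℤ :=
  (Fintype.card G.Edge : ℤ) - Fintype.card G.V + 1 + ∑ v, gV v

/-- The number of connected components of the spanning subgraph with edge set `S`. -/
noncomputable def ncomp (S : Finset G.Edge) : ℕ :=
  Nat.card (Quotient (Relation.EqvGen.setoid (G.adjOn S)))

end HGraph

/-- A harmonic morphism of graphs: a graph morphism together with local degrees. -/
structure HarmonicTo (Gt G : HGraph) where
  fV : Gt.V → G.V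
  fH : Gt.H → G.H
  root_comm : ∀ h, G.root (fH h) = fV (Gt.root h)
  inv_comm : ∀ h, fH (Gt.inv h) = G.inv (fH h)
  dV : Gt.V → ℕ
  dH : Gt.H → ℕ
  dV_pos : ∀ v, 0 < dV v
  dH_pos : ∀ h, 0 < dH h
  dH_inv : ∀ h, dH (Gt.inv h) = dH h
  harm : ∀ (w : Gt.V) (h : G.H), G.root h = fV w →
    dV w = ∑ x ∈ Finset.univ.filter (fun x => Gt.root x = w ∧ fH x = h), dH x

namespace HarmonicTo

variable {Gt G : HGraph} (f : HarmonicTo Gt G)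

/-- The induced map on edges. -/
def fE : Gt.Edge → G.Edge :=
  Quotient.lift (fun h => G.edge (f.fH h)) (by
    rintro a b (rfl | rfl)
    · rfl
    · show G.edge (f.fH a) = G.edge (f.fH (Gt.inv a))
      rw [f.inv_comm]
      exact (G.edge_inv _).symm)

/-- The local degree of an edge. -/
def dE : Gt.Edge → ℕ :=
  Quotient.lift f.dH (by
    rintro a b (rfl | rfl)
    · rfl
    · exact (f.dH_inv a).symm)

/-- The ramification degree at a vertex of the source. -/
def Ram (gVt : Gt.V → ℤ) (gV : G.V → ℤ) (w : Gt.V) : ℤ :=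
  (f.dV w : ℤ) * G.chiZ gV (f.fV w) - Gt.chiZ gVt w

end HarmonicTo

namespace HGraph

/-- A cycle contained in a set of edges `S`: a closed walk with pairwise distinct edges and
pairwise distinct vertices, all of whose edges belong to `S`. -/
def IsCycleIn (G : HGraph) (S : Set G.Edge) {n : ℕ} (c : Fin (n + 1) → G.H) : Prop :=
  (∀ i, G.edge (c i) ∈ S) ∧
  (∀ i, G.root (G.inv (c i)) = G.root (c (i + 1))) ∧
  (Function.Injective fun i => G.edge (c i)) ∧
  (Function.Injective fun i => G.root (c i))

/-- A signed graph is unbalanced if it contains a cycle of odd total sign. -/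
def Unbal (G : HGraph) (σ : G.Edge → ZMod 2) : Prop :=
  ∃ (n : ℕ) (c : Fin (n + 1) → G.H),
    G.IsCycleIn Set.univ c ∧ (∑ i, σ (G.edge (c i))) = 1

/-- Every connected component of the graph obtained from `G` by deleting the edges in `F` is
unbalanced: every vertex can reach, through edges not in `F`, the base point of a cycle of odd
total sign avoiding `F`. -/
def DelUnbal (G : HGraph) (σ : G.Edge → ZMod 2) (F : Finset G.Edge) : Prop :=
  ∀ v : G.V, ∃ (n : ℕ) (c : Fin (n + 1) → G.H),
    G.IsCycleIn {e | e ∉ F} c ∧ (∑ i, σ (G.edge (c i))) = 1 ∧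
    Relation.ReflTransGen (G.adjOn Fᶜ) v (G.root (c 0))

/-- A Prym basis: a set `B` of `|V(G)|` edges such that every connected component of the
spanning subgraph `(V(G), B)` is unbalanced. -/
def PrymBasis (G : HGraph) (σ : G.Edge → ZMod 2) (B : Finset G.Edge) : Prop :=
  B.card = Fintype.card G.V ∧
  ∀ v : G.V, ∃ (n : ℕ) (c : Fin (n + 1) → G.H),
    G.IsCycleIn {e | e ∈ B} c ∧ (∑ i, σ (G.edge (c i))) = 1 ∧
    Relation.ReflTransGen (G.adjOn B) v (G.root (c 0))

/-- The free double cover associated to a signed graph. -/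
def cover (G : HGraph) (σ : G.Edge → ZMod 2) : HGraph where
  V := G.V × ZMod 2
  H := G.H × ZMod 2
  root p := (G.root p.1, p.2)
  inv p := (G.inv p.1, p.2 + σ (G.edge p.1))
  inv_inv := by
    intro p
    have h2 : ∀ a : ZMod 2, a + a = 0 := by decide
    ext
    · exact G.inv_inv p.1
    · show p.2 + σ (G.edge p.1) + σ (G.edge (G.inv p.1)) = p.2
      rw [G.edge_inv, add_assoc, h2, add_zero]
  inv_ne := by
    intro p hp
    exact G.inv_ne p.1 (congrArg Prod.fst hp)

end HGraph

/-!
Give each edge `e` the signed incidence vector `χ_{r(h)} - (-1)^{σ(e)} χ_{r(ι h)} ∈ ℚ^V` of one of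
its half-edges `h` (the other one gives a multiple of it). For a set `T` of edges these vectors
telescope along walks in `T`: a walk from `a` to `b` of total sign `s` puts `χ_a - (-1)^s χ_b`
into their span. An odd cycle at `b` thus puts `2 χ_b`, hence `χ_b`, into the span, and with it
`χ_a` for every `a` in the component of `b`. Conversely, if the component of `v` is balanced, all
walks in `T` from `v` to `u` have the same sign `s(u)` (otherwise a shortest odd closed walk would
be an odd cycle), and the switching function `u ↦ (-1)^{s(u)}` on that component, `0` elsewhere,
annihilates every edge vector of `T` but not `χ_v`.

Hence every component of `G ∖ F` is unbalanced exactly when the vectors of the edges outside `F`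
span `ℚ^V`, i.e. when `F` is coindependent in the linear matroid of the edge vectors. For `F = ∅`
this says that all edge vectors span `ℚ^V`, so the bases of that matroid have `|V|` elements and
those of its dual `|E| - |V|`.
-/

section LinearMatroid

open Submodule Set Module

variable {α K W : Type*} [Field K] [AddCommGroup W] [Module K W] {φ : α → W}

theorem LinearIndepOn.finrank_span_image {s : Set α} [Finite s] (h : LinearIndepOn K φ s) :
    finrank K (span K (φ '' s)) = s.ncard := by
  have := Fintype.ofFinite s
  rw [image_eq_range, finrank_span_eq_card h, ncard_eq_toFinset_card', toFinset_card]

variable [Finite α]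

theorem LinearIndepOn.exists_insert_of_ncard_lt {I J : Set α} (hI : LinearIndepOn K φ I)
    (hJ : LinearIndepOn K φ J) (hlt : I.ncard < J.ncard) :
    ∃ e ∈ J, e ∉ I ∧ LinearIndepOn K φ (insert e I) := by
  by_contra! hno
  have hJI : φ '' J ⊆ span K (φ '' I) := by
    rintro _ ⟨e, heJ, rfl⟩
    by_contra hspan
    by_cases heI : e ∈ I
    · exact hspan (subset_span (mem_image_of_mem φ heI))
    · exact hno e heJ heI (hI.insert hspan)
  have := FiniteDimensional.span_of_finite K ((toFinite I).image φ)
  have := Submodule.finrank_mono (span_le.mpr hJI)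
  rw [hI.finrank_span_image, hJ.finrank_span_image] at this
  omega

variable (K) in
def linearMatroid (φ : α → W) : Matroid α :=
  (IndepMatroid.ofFinite finite_univ (LinearIndepOn K φ) (linearIndepOn_empty K φ)
    (fun _ _ hJ hIJ => hJ.mono hIJ) (fun _ _ => LinearIndepOn.exists_insert_of_ncard_lt)
    (fun _ _ => subset_univ _)).matroid

theorem linearMatroid_ground : (linearMatroid K φ).E = univ := rfl

theorem linearMatroid_indep_iff {I : Set α} :
    (linearMatroid K φ).Indep I ↔ LinearIndepOn K φ I := Iff.rfl

theorem linearMatroid_isBase_iff {B : Set α} :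
    (linearMatroid K φ).IsBase B ↔ LinearIndepOn K φ B ∧ range φ ⊆ span K (φ '' B) := by
  refine ⟨fun hB => ⟨hB.indep, ?_⟩, fun ⟨hB, hspan⟩ => ?_⟩
  · rintro _ ⟨e, rfl⟩
    by_contra he
    have heB : e ∈ B := (hB.eq_of_subset_indep (hB.indep.insert he) (subset_insert e B)).symm ▸
      mem_insert e B
    exact he (subset_span (mem_image_of_mem φ heB))
  · refine Matroid.Indep.isBase_of_forall_insert hB fun e he => ?_
    rw [linearMatroid_indep_iff, linearIndepOn_insert he.2]
    exact fun h => h.2 (hspan (mem_range_self e))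

theorem linearMatroid_coindep_iff {X : Set α} :
    (linearMatroid K φ).Coindep X ↔ span K (range φ) ≤ span K (φ '' Xᶜ) := by
  rw [Matroid.coindep_iff_exists (subset_univ X)]
  constructor
  · rintro ⟨B, hB, hBX⟩
    rw [span_le]
    exact (linearMatroid_isBase_iff.mp hB).2.trans
      (span_mono (image_mono (hBX.trans (sdiff_subset_compl _ _))))
  · intro h
    obtain ⟨B, hBX, -, hspan, hB⟩ :=
      exists_linearIndepOn_extension (linearIndepOn_empty K φ) (empty_subset Xᶜ)
    refine ⟨B, linearMatroid_isBase_iff.mpr ⟨hB, ?_⟩, fun e he => ⟨mem_univ e, hBX he⟩⟩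
    exact subset_span.trans (h.trans (span_le.mpr hspan))

theorem linearMatroid_isBase_ncard (hφ : span K (range φ) = ⊤) {B : Set α}
    (hB : (linearMatroid K φ).IsBase B) : B.ncard = finrank K W := by
  obtain ⟨hind, hspan⟩ := linearMatroid_isBase_iff.mp hB
  have htop : span K (φ '' B) = ⊤ := top_le_iff.mp (hφ ▸ span_le.mpr hspan)
  rw [← hind.finrank_span_image, htop, finrank_top]

end LinearMatroid

theorem List.exists_eq_append_of_not_nodup_map {α β : Type*} {f : α → β} {l : List α}
    (h : ¬ (l.map f).Nodup) : ∃ l₁ x l₂ y l₃, l = l₁ ++ x :: l₂ ++ y :: l₃ ∧ f x = f y := by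
  induction l with
  | nil => simp at h
  | cons a l ih =>
    rw [List.map_cons, List.nodup_cons, not_and_or, not_not] at h
    rcases h with h | h
    · obtain ⟨y, hy, hya⟩ := List.mem_map.mp h
      obtain ⟨l₂, l₃, rfl⟩ := List.append_of_mem hy
      exact ⟨[], a, l₂, y, l₃, rfl, hya.symm⟩
    · obtain ⟨l₁, x, l₂, y, l₃, rfl, hxy⟩ := ih h
      exact ⟨a :: l₁, x, l₂, y, l₃, rfl, hxy⟩

namespace HGraph

open Relation Submodule Set

variable {G : HGraph} {σ : G.Edge → ZMod 2} {T : Finset G.Edge}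

theorem edge_out (e : G.Edge) : G.edge (Quotient.out e) = e := Quotient.out_eq e

def signValue (s : ZMod 2) : ℚ := (-1) ^ s.val

@[simp] theorem signValue_zero : signValue 0 = 1 := rfl

@[simp] theorem signValue_one : signValue 1 = -1 := pow_one _

theorem signValue_add (s t : ZMod 2) : signValue (s + t) = signValue s * signValue t := by
  rw [signValue, signValue, signValue, ← pow_add, ZMod.val_add, ← neg_one_pow_eq_pow_mod_two]

theorem signValue_mul_self (s : ZMod 2) : signValue s * signValue s = 1 := by
  rw [← signValue_add, CharTwo.add_self_eq_zero, signValue_zero]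

variable (σ) in
def halfEdgeVector (h : G.H) : G.V → ℚ :=
  Pi.single (G.root h) 1 - signValue (σ (G.edge h)) • Pi.single (G.root (G.inv h)) 1

variable (σ) in
noncomputable def edgeVector (e : G.Edge) : G.V → ℚ := halfEdgeVector σ (Quotient.out e)

theorem halfEdgeVector_inv (h : G.H) :
    halfEdgeVector σ (G.inv h) = -signValue (σ (G.edge h)) • halfEdgeVector σ h := by
  rw [halfEdgeVector, halfEdgeVector, G.edge_inv, G.inv_inv, smul_sub, smul_smul, neg_mul,
    signValue_mul_self, neg_smul, neg_smul, one_smul]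
  abel

theorem halfEdgeVector_mem_span {S : Set G.Edge} {h : G.H} (hS : G.edge h ∈ S) :
    halfEdgeVector σ h ∈ span ℚ (edgeVector σ '' S) := by
  have hmem : edgeVector σ (G.edge h) ∈ span ℚ (edgeVector σ '' S) :=
    subset_span (mem_image_of_mem _ hS)
  obtain ⟨h₀, rfl | rfl, hh₀⟩ : ∃ h₀, (h = h₀ ∨ h = G.inv h₀) ∧
      edgeVector σ (G.edge h) = halfEdgeVector σ h₀ :=
    ⟨_, Quotient.mk_out (s := G.edgeSetoid) h, rfl⟩
  · rwa [hh₀] at hmem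
  · rw [halfEdgeVector_inv, ← hh₀]
    exact smul_mem _ _ hmem

variable (T) in
def IsWalk : G.V → List G.H → G.V → Prop
  | a, [], b => a = b
  | a, h :: l, b => G.edge h ∈ T ∧ G.root h = a ∧ IsWalk (G.root (G.inv h)) l b

variable (σ) in
def walkSign (l : List G.H) : ZMod 2 := (l.map fun h => σ (G.edge h)).sum

@[simp] theorem walkSign_append (l₁ l₂ : List G.H) :
    walkSign σ (l₁ ++ l₂) = walkSign σ l₁ + walkSign σ l₂ := by
  simp [walkSign]

@[simp] theorem walkSign_cons (h : G.H) (l : List G.H) :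
    walkSign σ (h :: l) = σ (G.edge h) + walkSign σ l := by
  simp [walkSign]

theorem walkSign_reverse_map_inv (l : List G.H) :
    walkSign σ (l.reverse.map G.inv) = walkSign σ l := by
  simp [walkSign, Function.comp_def, G.edge_inv]

theorem walkSign_ofFn {n : ℕ} (c : Fin n → G.H) :
    walkSign σ (List.ofFn c) = ∑ i, σ (G.edge (c i)) := by
  simp [walkSign, List.sum_ofFn]

@[simp] theorem isWalk_cons {a b : G.V} {h : G.H} {l : List G.H} :
    IsWalk T a (h :: l) b ↔ G.edge h ∈ T ∧ G.root h = a ∧ IsWalk T (G.root (G.inv h)) l b :=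
  Iff.rfl

theorem isWalk_append {a c : G.V} {l₁ l₂ : List G.H} :
    IsWalk T a (l₁ ++ l₂) c ↔ ∃ b, IsWalk T a l₁ b ∧ IsWalk T b l₂ c := by
  induction l₁ generalizing a with
  | nil => simp [IsWalk]
  | cons h l ih => simp [ih, and_assoc]

theorem IsWalk.concat {a : G.V} {l : List G.H} {h : G.H} (hl : IsWalk T a l (G.root h))
    (hT : G.edge h ∈ T) : IsWalk T a (l ++ [h]) (G.root (G.inv h)) :=
  isWalk_append.mpr ⟨_, hl, hT, rfl, rfl⟩

theorem IsWalk.reverse_map_inv {a b : G.V} {l : List G.H} (hl : IsWalk T a l b) :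
    IsWalk T b (l.reverse.map G.inv) a := by
  induction l generalizing a with
  | nil => exact hl.symm
  | cons h l ih =>
    obtain ⟨hT, rfl, hl⟩ := hl
    rw [List.reverse_cons, List.map_append]
    have := (ih hl).concat (h := G.inv h) (by rwa [G.edge_inv])
    rwa [G.inv_inv] at this

theorem IsWalk.reflTransGen {a b : G.V} {l : List G.H} (hl : IsWalk T a l b) :
    ReflTransGen (G.adjOn T) a b := by
  induction l generalizing a with
  | nil => exact hl ▸ ReflTransGen.refl
  | cons h l ih =>
    obtain ⟨hT, rfl, hl⟩ := hl
    exact ReflTransGen.head ⟨h, hT, rfl, rfl⟩ (ih hl)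

theorem exists_isWalk_of_reflTransGen {a b : G.V} (hab : ReflTransGen (G.adjOn T) a b) :
    ∃ l, IsWalk T a l b := by
  induction hab using ReflTransGen.head_induction_on with
  | refl => exact ⟨[], rfl⟩
  | head hstep _ ih =>
    obtain ⟨h, hT, rfl, hb⟩ := hstep
    obtain ⟨l, hl⟩ := ih
    exact ⟨h :: l, hT, rfl, hb ▸ hl⟩

theorem isWalk_ofFn {n : ℕ} {c : Fin (n + 1) → G.H} {a b : G.V} :
    IsWalk T a (List.ofFn c) b ↔ (∀ i, G.edge (c i) ∈ T) ∧ G.root (c 0) = a ∧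
      (∀ i : Fin n, G.root (G.inv (c i.castSucc)) = G.root (c i.succ)) ∧
      G.root (G.inv (c (Fin.last n))) = b := by
  induction n generalizing a with
  | zero => simp [IsWalk, Fin.forall_fin_one]
  | succ n ih =>
    rw [List.ofFn_succ, isWalk_cons, ih, Fin.forall_fin_succ (P := fun i => G.edge (c i) ∈ T),
      Fin.forall_fin_succ (P := fun i => G.root (G.inv (c i.castSucc)) = G.root (c i.succ))]
    simp only [Fin.succ_last, Fin.castSucc_zero, Fin.succ_castSucc, eq_comm (b := G.root (c _))]
    tauto

theorem isWalk_ofFn_self {n : ℕ} {c : Fin (n + 1) → G.H} :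
    IsWalk T (G.root (c 0)) (List.ofFn c) (G.root (c 0)) ↔
      (∀ i, G.edge (c i) ∈ T) ∧ ∀ i, G.root (G.inv (c i)) = G.root (c (i + 1)) := by
  rw [isWalk_ofFn, Fin.forall_fin_succ' (P := fun i => G.root (G.inv (c i)) = G.root (c (i + 1)))]
  simp [Fin.coeSucc_eq_succ, Fin.last_add_one]

theorem edge_injective_of_root_injective {n : ℕ} {c : Fin (n + 1) → G.H}
    (hchain : ∀ i, G.root (G.inv (c i)) = G.root (c (i + 1)))
    (hroot : Function.Injective fun i => G.root (c i)) (hodd : ∑ i, σ (G.edge (c i)) = 1) :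
    Function.Injective fun i => G.edge (c i) := by
  intro i j hij
  rcases Quotient.exact (s := G.edgeSetoid) hij with h | h
  · exact hroot (congrArg G.root h).symm
  by_contra hne
  -- `c j = ι (c i)` forces `j = i + 1` and `i = j + 1`: the walk goes back and forth along one
  -- edge, so it has length 2 and even sign.
  have hj : j = i + 1 := hroot (by simp only [h, hchain])
  have hi : i = j + 1 := hroot (by simp only [← hchain j, h, G.inv_inv])
  obtain rfl : n = 1 := by
    have h1 := congrArg Fin.val hj
    have h2 := congrArg Fin.val hi
    simp only [Fin.val_add_one, Fin.ext_iff, Fin.val_last] at h1 h2 hne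
    have := i.isLt
    have := j.isLt
    split_ifs at h1 h2 <;> omega
  have h01 : G.edge (c 0) = G.edge (c 1) := by
    fin_cases i <;> fin_cases j <;> first | exact absurd rfl hne | exact hij | exact hij.symm
  rw [Fin.sum_univ_two, h01, CharTwo.add_self_eq_zero] at hodd
  exact zero_ne_one hodd

variable (σ T) in
def UnbalancedAt (v : G.V) : Prop :=
  ∃ (n : ℕ) (c : Fin (n + 1) → G.H), G.IsCycleIn ↑T c ∧ ∑ i, σ (G.edge (c i)) = 1 ∧
    ReflTransGen (G.adjOn T) v (G.root (c 0))

theorem IsWalk.unbalancedAt {a : G.V} {l : List G.H} (hl : IsWalk T a l a)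
    (hodd : walkSign σ l = 1) : UnbalancedAt σ T a := by
  induction hlen : l.length using Nat.strong_induction_on generalizing a l with
  | _ m ih =>
  by_cases hnd : (l.map G.root).Nodup
  · obtain ⟨n, hn⟩ : ∃ n, l.length = n + 1 := Nat.exists_eq_succ_of_ne_zero fun h0 => by
      simp [List.length_eq_zero_iff.mp h0, walkSign] at hodd
    obtain ⟨c, rfl⟩ : ∃ c : Fin (n + 1) → G.H, l = List.ofFn c :=
      ⟨fun i => l[i.val], List.ext_getElem (by simp [hn]) fun i _ _ => by rw [List.getElem_ofFn]⟩
    obtain ⟨-, rfl, -, -⟩ := isWalk_ofFn.mp hl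
    obtain ⟨hT, hchain⟩ := isWalk_ofFn_self.mp hl
    rw [List.map_ofFn, List.nodup_ofFn] at hnd
    rw [walkSign_ofFn] at hodd
    exact ⟨n, c, ⟨hT, hchain, edge_injective_of_root_injective hchain hnd hodd, hnd⟩, hodd,
      ReflTransGen.refl⟩
  -- a repeated vertex splits the walk into two shorter closed walks, one of them odd
  obtain ⟨l₁, x, l₂, y, l₃, rfl, hxy⟩ := List.exists_eq_append_of_not_nodup_map hnd
  obtain ⟨b, ⟨b', hl₁, hx, hx', hl₂⟩, hy, hy', hl₃⟩ := by simpa only [isWalk_append] using hl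
  obtain rfl : b' = b := by rw [← hx', ← hy', hxy]
  have hodd' : walkSign σ (x :: l₂) + walkSign σ (l₁ ++ y :: l₃) = 1 := by
    rw [← hodd]
    simp only [walkSign_append, walkSign_cons]
    abel
  rcases (by decide : ∀ s t : ZMod 2, s + t = 1 → s = 1 ∨ t = 1) _ _ hodd' with h | h
  · obtain ⟨n, c, hc, hc1, hreach⟩ :=
      ih _ (by simp [← hlen]; omega) (l := x :: l₂) (isWalk_cons.mpr ⟨hx, hx', hl₂⟩) h rfl
    exact ⟨n, c, hc, hc1, hl₁.reflTransGen.trans hreach⟩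
  · exact ih _ (by simp [← hlen]) (l := l₁ ++ y :: l₃)
      (isWalk_append.mpr ⟨b', hl₁, isWalk_cons.mpr ⟨hy, hy', hl₃⟩⟩) h rfl

theorem IsWalk.single_sub_smul_single_mem_span {a b : G.V} {l : List G.H}
    (hl : IsWalk T a l b) :
    Pi.single a 1 - signValue (walkSign σ l) • Pi.single b 1 ∈ span ℚ (edgeVector σ '' ↑T) := by
  induction l generalizing a with
  | nil =>
    obtain rfl : a = b := hl
    simp [walkSign]
  | cons h l ih =>
    obtain ⟨hT, rfl, hl⟩ := hl
    have hsplit : Pi.single (G.root h) 1 - signValue (walkSign σ (h :: l)) • Pi.single b 1 =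
        halfEdgeVector σ h + signValue (σ (G.edge h)) •
          (Pi.single (G.root (G.inv h)) 1 - signValue (walkSign σ l) • Pi.single b 1) := by
      rw [walkSign_cons, signValue_add, halfEdgeVector, smul_sub, smul_smul]
      abel
    rw [hsplit]
    exact add_mem (halfEdgeVector_mem_span hT) (smul_mem _ _ (ih hl))

theorem UnbalancedAt.single_mem_span {v : G.V} (hv : UnbalancedAt σ T v) :
    Pi.single v 1 ∈ span ℚ (edgeVector σ '' ↑T) := by
  obtain ⟨n, c, ⟨hT, hchain, -, -⟩, hodd, hreach⟩ := hv
  have hcycle := (isWalk_ofFn_self.mpr ⟨hT, hchain⟩).single_sub_smul_single_mem_span (σ := σ)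
  rw [walkSign_ofFn, hodd, signValue_one, neg_one_smul, sub_neg_eq_add, ← two_smul ℚ] at hcycle
  have hbase := (smul_mem_iff _ two_ne_zero).mp hcycle
  obtain ⟨l, hl⟩ := exists_isWalk_of_reflTransGen hreach
  have := add_mem (hl.single_sub_smul_single_mem_span (σ := σ))
    (smul_mem _ (signValue (walkSign σ l)) hbase)
  rwa [sub_add_cancel] at this

theorem walkSign_eq_of_not_unbalancedAt {v u : G.V} (hv : ¬ UnbalancedAt σ T v)
    {l l' : List G.H} (hl : IsWalk T v l u) (hl' : IsWalk T v l' u) :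
    walkSign σ l = walkSign σ l' := by
  by_contra hne
  refine hv ((isWalk_append.mpr ⟨u, hl, hl'.reverse_map_inv⟩).unbalancedAt ?_)
  rw [walkSign_append, walkSign_reverse_map_inv]
  revert hne
  generalize walkSign σ l = s
  generalize walkSign σ l' = t
  revert s t
  decide

theorem exists_switching_of_not_unbalancedAt {v : G.V} (hv : ¬ UnbalancedAt σ T v) :
    ∃ θ : G.V → ℚ, θ v = 1 ∧ ∀ h, G.edge h ∈ T →
      θ (G.root h) = signValue (σ (G.edge h)) * θ (G.root (G.inv h)) := by
  let θ : G.V → ℚ := fun u =>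
    if hu : ∃ l, IsWalk T v l u then signValue (walkSign σ hu.choose) else 0
  have hθ {u : G.V} {l : List G.H} (hl : IsWalk T v l u) : θ u = signValue (walkSign σ l) := by
    have hu : ∃ l, IsWalk T v l u := ⟨l, hl⟩
    simp only [θ, dif_pos hu]
    rw [walkSign_eq_of_not_unbalancedAt hv hu.choose_spec hl]
  refine ⟨θ, by simpa [walkSign] using hθ (l := []) rfl, fun h hT => ?_⟩
  by_cases ha : ∃ l, IsWalk T v l (G.root h)
  · obtain ⟨l, hl⟩ := ha
    rw [hθ hl, hθ (hl.concat hT), walkSign_append, signValue_add, mul_left_comm]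
    simp [walkSign, signValue_mul_self]
  · have hb : ¬ ∃ l, IsWalk T v l (G.root (G.inv h)) := fun ⟨l, hl⟩ => ha ⟨_, by
      simpa only [G.inv_inv] using hl.concat (h := G.inv h) (by rwa [G.edge_inv])⟩
    simp only [θ, dif_neg ha, dif_neg hb, mul_zero]

theorem span_edgeVector_ne_top_of_switching {v : G.V} {θ : G.V → ℚ} (hθv : θ v ≠ 0)
    (hθ : ∀ h, G.edge h ∈ T → θ (G.root h) = signValue (σ (G.edge h)) * θ (G.root (G.inv h))) :
    span ℚ (edgeVector σ '' ↑T) ≠ ⊤ := by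
  have hker : span ℚ (edgeVector σ '' ↑T) ≤ LinearMap.ker (Fintype.linearCombination ℚ θ) := by
    rw [span_le]
    rintro _ ⟨e, he, rfl⟩
    have hT : G.edge (Quotient.out e) ∈ T := by rwa [edge_out]
    simp [edgeVector, halfEdgeVector, hθ _ hT]
  intro htop
  have hv := hker (htop ▸ mem_top : Pi.single v (1 : ℚ) ∈ span ℚ (edgeVector σ '' ↑T))
  rw [LinearMap.mem_ker, Fintype.linearCombination_apply_single, one_smul] at hv
  exact hθv hv

theorem span_edgeVector_eq_top_iff :
    span ℚ (edgeVector σ '' ↑T) = ⊤ ↔ ∀ v, UnbalancedAt σ T v := by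
  refine ⟨fun htop v => by_contra fun hv => ?_, fun h => ?_⟩
  · obtain ⟨θ, hθv, hθ⟩ := exists_switching_of_not_unbalancedAt hv
    exact span_edgeVector_ne_top_of_switching (hθv ▸ one_ne_zero) hθ htop
  · rw [eq_top_iff, ← (Pi.basisFun ℚ G.V).span_eq, span_le]
    rintro _ ⟨v, rfl⟩
    simpa using (h v).single_mem_span

theorem delUnbal_iff_forall_unbalancedAt {F : Finset G.Edge} :
    G.DelUnbal σ F ↔ ∀ v, UnbalancedAt σ Fᶜ v := by
  simp only [DelUnbal, UnbalancedAt, Finset.coe_compl]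
  rfl

theorem unbalancedAt_univ (hconn : G.ConnectedOn Finset.univ) (hunbal : G.Unbal σ) (v : G.V) :
    UnbalancedAt σ Finset.univ v := by
  obtain ⟨n, c, hc, hodd⟩ := hunbal
  exact ⟨n, c, by rwa [Finset.coe_univ], hodd, hconn v _⟩

end HGraph

/-- **Statement 14.** For a connected unbalanced signed graph `(G, σ)`, the edge sets `F` such
that every connected component of `G ∖ F` is unbalanced form the independent sets of a matroid
on `E(G)`, of rank `|E(G)| − |V(G)|`: the empty set is independent, independence is closed under
taking subsets, the exchange axiom holds, and every maximal independent set has cardinality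
`|E(G)| − |V(G)|`. -/
theorem signed_cographic_matroid (G : HGraph) (σ : G.Edge → ZMod 2)
    (hconn : G.Connected) (hunbal : G.Unbal σ) :
    G.DelUnbal σ ∅ ∧
    (∀ F F' : Finset G.Edge, F ⊆ F' → G.DelUnbal σ F' → G.DelUnbal σ F) ∧
    (∀ F F' : Finset G.Edge, G.DelUnbal σ F → G.DelUnbal σ F' → F.card < F'.card →
      ∃ e ∈ F' \ F, G.DelUnbal σ (insert e F)) ∧
    (∀ F : Finset G.Edge, G.DelUnbal σ F →
      (∀ e ∉ F, ¬ G.DelUnbal σ (insert e F)) →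
      F.card = Fintype.card G.Edge - Fintype.card G.V) := by
  set M := linearMatroid ℚ (HGraph.edgeVector σ)
  have hspan : Submodule.span ℚ (Set.range (HGraph.edgeVector σ)) = ⊤ := by
    rw [← Set.image_univ, ← Finset.coe_univ, HGraph.span_edgeVector_eq_top_iff]
    exact HGraph.unbalancedAt_univ hconn.2 hunbal
  have hindep (F : Finset G.Edge) : G.DelUnbal σ F ↔ M✶.Indep ↑F := by
    rw [← Matroid.coindep_def, linearMatroid_coindep_iff, hspan, top_le_iff, ← Finset.coe_compl,
      HGraph.span_edgeVector_eq_top_iff, HGraph.delUnbal_iff_forall_unbalancedAt]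
  simp only [hindep, Finset.coe_empty, Finset.coe_insert]
  refine ⟨M✶.empty_indep, fun F F' hFF' hF' => hF'.subset hFF', fun F F' hF hF' hlt => ?_,
    fun F hF hmax => ?_⟩
  · obtain ⟨e, he, hins⟩ := hF.augment hF' (by simpa [Set.encard_coe_eq_coe_finsetCard] using hlt)
    exact ⟨e, by simpa using he, hins⟩
  · have hB : M.IsBase (↑F)ᶜ := by
      have := (hF.isBase_of_forall_insert fun e he => hmax e he.2).compl_isBase_of_dual
      rwa [linearMatroid_ground, ← Set.compl_eq_univ_sdiff] at this
    have hcard := linearMatroid_isBase_ncard hspan hB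
    rw [← Finset.coe_compl, Set.ncard_coe_finset, Finset.card_compl,
      Module.finrank_fintype_fun_eq_card] at hcard
    have := Finset.card_le_univ F
    omega
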